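/- Local conservation of the vertical CDG scheme: suppose Σ_i b_i β_i(z) = 1 for all z ∈ h₁, Σ_i b_i φ_i(z) = 1 for all z ∈ h₀ ∪ S, all the functions β_i·q¹, φ_i·q⁰, φ_i·q₋ and φ_i·q₊ are integrable on h₁, h₀, S and S respectively, and for every i the scheme equation ∫_{h₁} β_i(z) q¹(z) dz = ∫_{h₀} φ_i(z) q⁰(z) dz − ∫_{S} (φ_i(z) q₋(z) − φ_i(z) q₊(z)) dz holds. Then the tracer mass is conserved up to boundary fluxes: ∫_{h₁} q¹(z) dz = ∫_{h₀} q⁰(z) dz − ∫_{S} (q₋(z) − q₊(z)) dz. -/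
import Mathlib


open MeasureTheory

lemma cdg_eqOn {ι : Type*} [Fintype ι] (ψ : ι → ℝ → ℝ) (c : ι → ℝ)
    (T : Set ℝ) (f : ℝ → ℝ)
    (hone : ∀ z ∈ T, ∑ i, c i * ψ i z = 1) :
    Set.EqOn (fun z => ∑ i, c i * (ψ i z * f z)) f T := by
  intro z hz
  simp only
  calc ∑ i, c i * (ψ i z * f z) = (∑ i, c i * ψ i z) * f z := by
        rw [Finset.sum_mul]; exact Finset.sum_congr rfl fun i _ => (mul_assoc _ _ _).symm
    _ = f z := by rw [hone z hz, one_mul]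

lemma cdg_int {ι : Type*} [Fintype ι] (ψ : ι → ℝ → ℝ) (c : ι → ℝ)
    (T : Set ℝ) (hT : MeasurableSet T) (f : ℝ → ℝ)
    (hone : ∀ z ∈ T, ∑ i, c i * ψ i z = 1)
    (hint : ∀ i, IntegrableOn (fun z => ψ i z * f z) T) :
    IntegrableOn f T :=
  IntegrableOn.congr_fun
    (integrable_finset_sum _ fun i _ => (hint i).const_mul (c i))
    (cdg_eqOn ψ c T f hone) hT

lemma cdg_aux {ι : Type*} [Fintype ι] (ψ : ι → ℝ → ℝ) (c : ι → ℝ)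
    (T : Set ℝ) (hT : MeasurableSet T) (f : ℝ → ℝ)
    (hone : ∀ z ∈ T, ∑ i, c i * ψ i z = 1)
    (hint : ∀ i, IntegrableOn (fun z => ψ i z * f z) T) :
    ∫ z in T, f z = ∑ i, c i * ∫ z in T, ψ i z * f z := by
  have h1 : ∫ z in T, f z = ∫ z in T, ∑ i, c i * (ψ i z * f z) :=
    (setIntegral_congr_fun hT (cdg_eqOn ψ c T f hone)).symm
  rw [h1, integral_finset_sum _ fun i _ => (hint i).const_mul (c i)]
  exact Finset.sum_congr rfl fun i _ => integral_const_mul _ _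

/-- Local conservation of the vertical CDG scheme.  If the test/trial functions
can reproduce the constant `1` via coefficients `b` (on the new layer `h₁` for
the trial functions `β`, and on `h₀ ∪ S` for the characteristic test functions
`φ`), all the relevant integrands are integrable, and the CDG scheme equation
holds for every test function index `i`, then the tracer mass is conserved up
to the boundary fluxes over the swept region `S`. -/
theorem cdg_vertical_local_conservation
    {ι : Type*} [Fintype ι]
    (β φ : ι → ℝ → ℝ) (b a : ι → ℝ)
    (h₁ h₀ S : Set ℝ)
    (hh₁ : MeasurableSet h₁) (hh₀ : MeasurableSet h₀) (hS : MeasurableSet S)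
    (q1 q0 qm qp : ℝ → ℝ)
    (hq1 : ∀ z, q1 z = ∑ j, a j * β j z)
    (hβ_one : ∀ z ∈ h₁, ∑ i, b i * β i z = 1)
    (hφ_one : ∀ z ∈ h₀ ∪ S, ∑ i, b i * φ i z = 1)
    (hint_β : ∀ i, IntegrableOn (fun z => β i z * q1 z) h₁)
    (hint_φ0 : ∀ i, IntegrableOn (fun z => φ i z * q0 z) h₀)
    (hint_φm : ∀ i, IntegrableOn (fun z => φ i z * qm z) S)
    (hint_φp : ∀ i, IntegrableOn (fun z => φ i z * qp z) S)
    (hscheme : ∀ i, ∫ z in h₁, β i z * q1 z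
      = (∫ z in h₀, φ i z * q0 z) - ∫ z in S, (φ i z * qm z - φ i z * qp z)) :
    ∫ z in h₁, q1 z = (∫ z in h₀, q0 z) - ∫ z in S, (qm z - qp z) := by
  have honem : ∀ z ∈ S, ∑ i, b i * φ i z = 1 := fun z hz => hφ_one z (Or.inr hz)
  have e1 := cdg_aux β b h₁ hh₁ q1 hβ_one hint_β
  have e0 := cdg_aux φ b h₀ hh₀ q0 (fun z hz => hφ_one z (Or.inl hz)) hint_φ0
  have em := cdg_aux φ b S hS qm honem hint_φm
  have ep := cdg_aux φ b S hS qp honem hint_φp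
  have eS : ∫ z in S, (qm z - qp z) = (∫ z in S, qm z) - ∫ z in S, qp z :=
    integral_sub (cdg_int φ b S hS qm honem hint_φm)
      (cdg_int φ b S hS qp honem hint_φp)
  have eSi : ∀ i, ∫ z in S, (φ i z * qm z - φ i z * qp z)
      = (∫ z in S, φ i z * qm z) - ∫ z in S, φ i z * qp z :=
    fun i => integral_sub (hint_φm i) (hint_φp i)
  rw [e1, e0, eS, em, ep]
  simp only [hscheme, eSi, mul_sub]
  rw [Finset.sum_sub_distrib, Finset.sum_sub_distrib]
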